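/- Let $m \ge 2$ and $\alpha > 0$ with $m\alpha^2 = 1$. Define $I_\epsilon(\alpha) = \int_{[0,2\pi)^m} \prod_{1 \le j < k \le m} \left(\sin\left|\frac{t_j-t_k}{2}\right| + \epsilon\right)^{-2\alpha^2} dt_1 \cdots dt_m$. Then there is a constant $\hat c_0$ such that for all sufficiently small $\epsilon > 0$, $\log(1/\epsilon) - \hat c_0 \le I_\epsilon(\alpha)$. -/

import Mathlib

/-!
Use `t i₀ ∈ [0, 1)` and the differences `u i = t i - t i₀` as coordinates (a shear of
determinant one). For `b = 2(j+1)ε ≤ 1`, the shell where `u i₁ ∈ [2jε, b)` and `u i ∈ [0, b)`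
otherwise has volume `2ε · b^(m-2)`. Its points are pairwise within `b`, so every factor
`sin |(t_j - t_k)/2| + ε` is at most `b/2 + ε ≤ b`; as the exponents add up to
`-2α² · m(m-1)/2 = -(m-1)`, the integrand is at least `b^(-(m-1))` there. Each shell thus
contributes at least `1/(j+1)`, and the disjoint shells with `j < ⌊1/(2ε)⌋` together give a
harmonic number, which is at least `log (1/(2ε))`.
-/

open Real MeasureTheory Set

lemma sin_abs_half_nonneg {x : ℝ} (hx : |x| ≤ 2 * π) : 0 ≤ sin |x / 2| :=
  sin_nonneg_of_nonneg_of_le_pi (abs_nonneg _) (by rw [abs_div, abs_two]; linarith)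

lemma sin_abs_half_le (x : ℝ) : sin |x / 2| ≤ |x| / 2 := by
  simpa [abs_div] using sin_le (abs_nonneg (x / 2))

namespace Finset

variable {κ : Type*} {P : Finset κ} {f : κ → ℝ} {r c : ℝ}

lemma prod_rpow_le_rpow_mul_card (hr : r ≤ 0) (hc : 0 < c) (hf : ∀ p ∈ P, c ≤ f p) :
    ∏ p ∈ P, f p ^ r ≤ c ^ (r * #P) := by
  rw [rpow_mul_natCast hc.le, ← prod_const]
  exact prod_le_prod (fun p hp => rpow_nonneg (hc.le.trans (hf p hp)) _)
    fun p hp => rpow_le_rpow_of_nonpos hc (hf p hp) hr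

lemma rpow_mul_card_le_prod_rpow (hr : r ≤ 0) (hc : 0 ≤ c) (hf₀ : ∀ p ∈ P, 0 < f p)
    (hf : ∀ p ∈ P, f p ≤ c) : c ^ (r * #P) ≤ ∏ p ∈ P, f p ^ r := by
  rw [rpow_mul_natCast hc, ← prod_const]
  exact prod_le_prod (fun p _ => rpow_nonneg hc _)
    fun p hp => rpow_le_rpow_of_nonpos (hf₀ p hp) (hf p hp) hr

end Finset

lemma sum_mul_measureReal_le_setIntegral {X κ : Type*} [MeasurableSpace X] {μ : Measure X}
    {f : X → ℝ} {S : Set X} {s : Finset κ} {A : κ → Set X} {c : κ → ℝ}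
    (hS : MeasurableSet S) (hμS : μ S ≠ ⊤) (hf : IntegrableOn f S μ) (hf₀ : ∀ x ∈ S, 0 ≤ f x)
    (hA : ∀ j ∈ s, MeasurableSet (A j)) (hAS : ∀ j ∈ s, A j ⊆ S)
    (hdisj : (s : Set κ).PairwiseDisjoint A) (hc : ∀ j ∈ s, ∀ x ∈ A j, c j ≤ f x) :
    ∑ j ∈ s, c j * μ.real (A j) ≤ ∫ x in S, f x ∂μ :=
  calc ∑ j ∈ s, c j * μ.real (A j)
      ≤ ∑ j ∈ s, ∫ x in A j, f x ∂μ := Finset.sum_le_sum fun j hj =>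
        setIntegral_ge_of_const_le_real (hA j hj) (measure_ne_top_of_subset (hAS j hj) hμS)
          (hc j hj) (hf.mono_set (hAS j hj))
    _ = ∫ x in ⋃ j ∈ s, A j, f x ∂μ :=
        (integral_biUnion_finset s hA hdisj fun j hj => hf.mono_set (hAS j hj)).symm
    _ ≤ ∫ x in S, f x ∂μ :=
        setIntegral_mono_set hf (ae_restrict_of_forall_mem hS hf₀) (iUnion₂_subset hAS).eventuallyLE

section Shell

variable {ι : Type*} [DecidableEq ι]

def shear (i₀ : ι) : (ι → ℝ) →ₗ[ℝ] (ι → ℝ) :=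
  LinearMap.id - (LinearMap.proj i₀).smulRight (1 - Pi.single i₀ 1)

lemma shear_apply (i₀ : ι) (t : ι → ℝ) (i : ι) :
    shear i₀ t i = if i = i₀ then t i₀ else t i - t i₀ := by
  by_cases h : i = i₀ <;> simp [shear, h]

lemma det_shear [Fintype ι] (i₀ : ι) : LinearMap.det (shear i₀) = 1 := by
  let e : ι → ℝ := Pi.single i₀ 1
  have : LinearMap.toMatrix' (shear i₀) =
      1 - Matrix.replicateCol Unit (1 - e) * Matrix.replicateRow Unit e := by
    ext i j
    rw [← Matrix.vecMulVec_eq]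
    by_cases hj : j = i₀ <;> by_cases hi : i = j <;>
      simp [e, shear, LinearMap.toMatrix'_apply, Matrix.one_apply, Pi.single_apply,
        Matrix.vecMulVec_apply, hi, hj]
  -- Matrix determinant lemma: the rank-one update contributes `1 - (1 - e) i₀ = 1`.
  rw [← LinearMap.det_toMatrix', this, Matrix.det_one_sub_mul_comm]
  simp [e]

def shellBox (i₀ i₁ : ι) (a b : ℝ) (i : ι) : Set ℝ :=
  if i = i₀ then Ico 0 1 else if i = i₁ then Ico a b else Ico 0 b

/-- The points with `t i₀ ∈ [0, 1)`, `t i₁ - t i₀ ∈ [a, b)` and `t i - t i₀ ∈ [0, b)` for the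
other `i`; as a preimage of a box under a shear, its volume is that of the box. -/
def shell (i₀ i₁ : ι) (a b : ℝ) : Set (ι → ℝ) :=
  shear i₀ ⁻¹' univ.pi (shellBox i₀ i₁ a b)

variable {i₀ i₁ : ι} {a b : ℝ} {t : ι → ℝ}

lemma measurableSet_shell [Fintype ι] : MeasurableSet (shell i₀ i₁ a b) := by
  refine (LinearMap.continuous_of_finiteDimensional _).measurable (.univ_pi fun i => ?_)
  unfold shellBox
  split_ifs <;> exact measurableSet_Ico

lemma volume_shell [Fintype ι] (h : i₁ ≠ i₀) (ha : 0 ≤ a) (hab : a ≤ b) :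
    volume.real (shell i₀ i₁ a b) = (b - a) * b ^ (Fintype.card ι - 2) := by
  rw [measureReal_def, shell, Measure.addHaar_preimage_linearMap _ (by simp [det_shear]),
    det_shear, volume_pi_pi]
  simp only [inv_one, abs_one, ENNReal.ofReal_one, one_mul]
  have hbox : ∀ i, (volume (shellBox i₀ i₁ a b i)).toReal =
      if i = i₀ then 1 else if i = i₁ then b - a else b := by
    intro i
    unfold shellBox
    split_ifs <;> simp [Real.volume_Ico, hab, ha.trans hab]
  have hi₁ : i₁ ∈ Finset.univ.erase i₀ := Finset.mem_erase.2 ⟨h, Finset.mem_univ _⟩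
  rw [ENNReal.toReal_prod, Finset.prod_congr rfl fun i _ => hbox i,
    ← Finset.mul_prod_erase _ _ (Finset.mem_univ i₀), ← Finset.mul_prod_erase _ _ hi₁,
    Finset.prod_congr rfl (g := fun _ => b), Finset.prod_const, Finset.card_erase_of_mem hi₁,
    Finset.card_erase_of_mem (Finset.mem_univ _), Finset.card_univ]
  · rw [if_pos rfl, if_neg h, if_pos rfl, one_mul, Nat.sub_sub]
  · intro i hi
    simp [(Finset.mem_erase.1 hi).1, (Finset.mem_erase.1 (Finset.mem_erase.1 hi).2).1]

lemma sub_mem_Ico_of_mem_shell (h : i₁ ≠ i₀) (ht : t ∈ shell i₀ i₁ a b) :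
    t i₁ - t i₀ ∈ Ico a b := by
  simpa [shell, shellBox, shear_apply, h] using ht i₁ (mem_univ _)

lemma disjoint_shell {a' b' : ℝ} (h : i₁ ≠ i₀) (hI : Disjoint (Ico a b) (Ico a' b')) :
    Disjoint (shell i₀ i₁ a b) (shell i₀ i₁ a' b') :=
  Set.disjoint_left.2 fun _ ht ht' =>
    Set.disjoint_left.1 hI (sub_mem_Ico_of_mem_shell h ht) (sub_mem_Ico_of_mem_shell h ht')

lemma bounds_of_mem_shell (h : i₁ ≠ i₀) (ha : 0 ≤ a) (ht : t ∈ shell i₀ i₁ a b) :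
    t i₀ ∈ Ico 0 1 ∧ ∀ i, t i - t i₀ ∈ Icc 0 b := by
  have h₁ := sub_mem_Ico_of_mem_shell h ht
  refine ⟨by simpa [shell, shellBox, shear_apply] using ht i₀ (mem_univ _), fun i => ?_⟩
  have hi := ht i (mem_univ _)
  simp only [shellBox, shear_apply] at hi
  split_ifs at hi with h₀ h₁'
  · subst h₀; simpa using ha.trans (h₁.1.trans h₁.2.le)
  · subst h₁'; exact ⟨ha.trans hi.1, hi.2.le⟩
  · exact Ico_subset_Icc_self hi

lemma abs_sub_le_of_mem_shell (h : i₁ ≠ i₀) (ha : 0 ≤ a) (ht : t ∈ shell i₀ i₁ a b) (i k : ι) :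
    |t i - t k| ≤ b := by
  obtain ⟨-, hb⟩ := bounds_of_mem_shell h ha ht
  rw [abs_sub_le_iff]
  constructor <;> linarith [(hb i).1, (hb i).2, (hb k).1, (hb k).2]

lemma shell_subset_pi_Ico {c : ℝ} (h : i₁ ≠ i₀) (ha : 0 ≤ a) (hbc : 1 + b ≤ c) :
    shell i₀ i₁ a b ⊆ {t | ∀ i, t i ∈ Ico 0 c} := fun t ht i => by
  obtain ⟨h₀, hb⟩ := bounds_of_mem_shell h ha ht
  constructor <;> linarith [h₀.1, h₀.2, (hb i).1, (hb i).2]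

lemma rpow_one_sub_card_mul_volume_shell [Fintype ι] {δ : ℝ} (h : i₁ ≠ i₀) (hδ : 0 < δ)
    (hcard : 2 ≤ Fintype.card ι) (j : ℕ) :
    (((j : ℝ) + 1) * δ) ^ (1 - Fintype.card ι : ℝ) *
      volume.real (shell i₀ i₁ (j * δ) ((j + 1) * δ)) = ((j : ℝ) + 1)⁻¹ := by
  obtain ⟨n, hn⟩ : ∃ n, Fintype.card ι = n + 2 := ⟨_, (Nat.sub_add_cancel hcard).symm⟩
  have hb : 0 < ((j : ℝ) + 1) * δ := by positivity
  rw [volume_shell h (by positivity) (by nlinarith), hn, Nat.add_sub_cancel, rpow_sub hb,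
    rpow_one, rpow_natCast]
  field_simp
  ring

end Shell

def periodCube (ι : Type*) : Set (ι → ℝ) := {t | ∀ i, t i ∈ Ico 0 (2 * π)}

noncomputable def chordProduct {ι : Type*} (P : Finset (ι × ι)) (r ε : ℝ) (t : ι → ℝ) : ℝ :=
  ∏ p ∈ P, (sin |(t p.1 - t p.2) / 2| + ε) ^ r

section ChordProduct

variable {ι : Type*} {P : Finset (ι × ι)} {r ε : ℝ} {t : ι → ℝ}

lemma abs_sub_le_of_mem_periodCube (ht : t ∈ periodCube ι) (i k : ι) : |t i - t k| ≤ 2 * π := by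
  rw [abs_sub_le_iff]
  constructor <;> linarith [(ht i).1, (ht i).2, (ht k).1, (ht k).2]

lemma measurableSet_periodCube [Fintype ι] : MeasurableSet (periodCube ι) := by
  have : periodCube ι = univ.pi fun _ => Ico 0 (2 * π) := by ext; simp [periodCube]
  exact this ▸ .univ_pi fun _ => measurableSet_Ico

lemma volume_periodCube_ne_top [Fintype ι] : volume (periodCube ι) ≠ ⊤ :=
  measure_ne_top_of_subset (s := Icc 0 fun _ => 2 * π)
    (fun _ ht => mem_Icc.2 ⟨fun i => (ht i).1, fun i => (ht i).2.le⟩)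
    isCompact_Icc.measure_lt_top.ne

lemma chordProduct_nonneg (hε : 0 < ε) (ht : t ∈ periodCube ι) : 0 ≤ chordProduct P r ε t :=
  Finset.prod_nonneg fun p _ =>
    rpow_nonneg (by linarith [sin_abs_half_nonneg (abs_sub_le_of_mem_periodCube ht p.1 p.2)]) _

lemma chordProduct_le (hr : r ≤ 0) (hε : 0 < ε) (ht : ∀ i k, |t i - t k| ≤ 2 * π) :
    chordProduct P r ε t ≤ ε ^ (r * P.card) :=
  Finset.prod_rpow_le_rpow_mul_card hr hε fun p _ =>
    le_add_of_nonneg_left (sin_abs_half_nonneg (ht p.1 p.2))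

lemma rpow_mul_card_le_chordProduct {b : ℝ} (hr : r ≤ 0) (hε : 0 < ε)
    (hεb : 2 * ε ≤ b) (hb : b ≤ 2 * π) (ht : ∀ i k, |t i - t k| ≤ b) :
    b ^ (r * P.card) ≤ chordProduct P r ε t :=
  Finset.rpow_mul_card_le_prod_rpow hr (by linarith)
    (fun p _ => by linarith [sin_abs_half_nonneg ((ht p.1 p.2).trans hb)])
    fun p _ => by linarith [sin_abs_half_le (t p.1 - t p.2), ht p.1 p.2]

lemma integrableOn_chordProduct [Fintype ι] (hr : r ≤ 0) (hε : 0 < ε) :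
    IntegrableOn (chordProduct P r ε) (periodCube ι) := by
  refine Measure.integrableOn_of_bounded volume_periodCube_ne_top
    (by unfold chordProduct; fun_prop : Measurable _).aestronglyMeasurable (M := ε ^ (r * P.card))
    (ae_restrict_of_forall_mem measurableSet_periodCube fun t ht => ?_)
  rw [norm_of_nonneg (chordProduct_nonneg hε ht)]
  exact chordProduct_le hr hε (abs_sub_le_of_mem_periodCube ht)

end ChordProduct

theorem harmonic_le_setIntegral_chordProduct {ι : Type*} [Fintype ι] [Nontrivial ι]
    (P : Finset (ι × ι)) {r ε : ℝ} (hrP : r * P.card = 1 - Fintype.card ι) (hε : 0 < ε) :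
    (harmonic ⌊1 / (2 * ε)⌋₊ : ℝ) ≤ ∫ t in periodCube ι, chordProduct P r ε t := by
  classical
  obtain ⟨i₀, i₁, h⟩ := exists_pair_ne ι
  have hcard : 2 ≤ Fintype.card ι := Fintype.one_lt_card
  have hr : r ≤ 0 := by
    have : (2 : ℝ) ≤ Fintype.card ι := by exact_mod_cast hcard
    nlinarith [P.card.cast_nonneg (α := ℝ)]
  set δ := 2 * ε
  have hδ₀ : 0 < δ := by positivity
  have hN : ∀ j ∈ Finset.range ⌊1 / δ⌋₊, ((j : ℝ) + 1) * δ ≤ 1 := fun j hj => by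
    have hj' : (j : ℝ) + 1 ≤ ⌊1 / δ⌋₊ := by exact_mod_cast Finset.mem_range.1 hj
    have : (j : ℝ) + 1 ≤ 1 / δ := hj'.trans (Nat.floor_le (by positivity))
    rwa [le_div_iff₀ hδ₀] at this
  have hmono : Monotone fun j : ℕ => (j : ℝ) * δ := fun _ _ hjk =>
    mul_le_mul_of_nonneg_right (Nat.cast_le.2 hjk) hδ₀.le
  have hdisj : (Finset.range ⌊1 / δ⌋₊ : Set ℕ).PairwiseDisjoint
      fun j : ℕ => shell i₀ i₁ (j * δ) ((j + 1) * δ) := fun j _ k _ hjk =>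
    disjoint_shell h.symm <| by
      simpa [Function.onFun] using hmono.pairwise_disjoint_on_Ico_succ hjk
  calc (harmonic ⌊1 / δ⌋₊ : ℝ)
      = ∑ j ∈ Finset.range ⌊1 / δ⌋₊, (((j : ℝ) + 1) * δ) ^ (r * P.card) *
          volume.real (shell i₀ i₁ (j * δ) ((j + 1) * δ)) := by
        push_cast [harmonic]
        exact Finset.sum_congr rfl fun j _ => by
          rw [hrP, rpow_one_sub_card_mul_volume_shell h.symm hδ₀ hcard]
    _ ≤ ∫ t in periodCube ι, chordProduct P r ε t := by
        refine sum_mul_measureReal_le_setIntegral measurableSet_periodCube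
          volume_periodCube_ne_top (integrableOn_chordProduct hr hε)
          (fun _ ht => chordProduct_nonneg hε ht) (fun _ _ => measurableSet_shell)
          (fun j hj => shell_subset_pi_Ico h.symm (by positivity) ?_) hdisj
          fun j hj _ ht => rpow_mul_card_le_chordProduct hr hε (by nlinarith) ?_
            (abs_sub_le_of_mem_shell h.symm (by positivity) ht)
        all_goals linarith [hN j hj, pi_gt_three]

theorem stmt12_general (m : ℕ) (hm : 2 ≤ m) (α : ℝ)
    (h : (m : ℝ) * α ^ 2 = 1) :
    ∃ c₀ : ℝ, ∃ ε₀ > (0 : ℝ), ∀ ε : ℝ, 0 < ε → ε < ε₀ →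
      Real.log (1 / ε) - c₀ ≤
        ∫ t in {t : Fin m → ℝ | ∀ i, t i ∈ Set.Ico (0 : ℝ) (2 * π)},
          ∏ p ∈ Finset.univ.filter (fun p : Fin m × Fin m => p.1 < p.2),
            (Real.sin |(t p.1 - t p.2) / 2| + ε) ^ (-2 * α ^ 2) := by
  have : Nontrivial (Fin m) := Fin.nontrivial_iff_two_le.2 hm
  have hrP : -2 * α ^ 2 * (Finset.univ.filter (fun p : Fin m × Fin m => p.1 < p.2)).card
      = 1 - Fintype.card (Fin m) := by
    rw [Fintype.card_product_filter_lt, Nat.cast_choose_two, Fintype.card_fin]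
    linear_combination (1 - (m : ℝ)) * h
  refine ⟨log 2, 1, one_pos, fun ε hε _ => ?_⟩
  calc log (1 / ε) - log 2 = log (1 / (2 * ε)) := by
        rw [← log_div (by positivity) two_ne_zero]; ring_nf
    _ ≤ harmonic ⌊1 / (2 * ε)⌋₊ := log_le_harmonic_floor _ (by positivity)
    _ ≤ _ := harmonic_le_setIntegral_chordProduct _ hrP hε

theorem stmt12 (m : ℕ) (hm : 2 ≤ m) (α : ℝ) (hα : 0 < α)
    (h : (m : ℝ) * α ^ 2 = 1) :
    ∃ c₀ : ℝ, ∃ ε₀ > (0 : ℝ), ∀ ε : ℝ, 0 < ε → ε < ε₀ →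
      Real.log (1 / ε) - c₀ ≤
        ∫ t in {t : Fin m → ℝ | ∀ i, t i ∈ Set.Ico (0 : ℝ) (2 * π)},
          ∏ p ∈ Finset.univ.filter (fun p : Fin m × Fin m => p.1 < p.2),
            (Real.sin |(t p.1 - t p.2) / 2| + ε) ^ (-2 * α ^ 2) :=
  stmt12_general m hm α h
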